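/- The operators defined by H_i·f = q^{−1}·f + (q·X_{i+1} − q^{−1}·X_i)·(f − f^{s_i})/(X_i − X_{i+1}) on the Laurent polynomial ring k[X_1^{±1}, …, X_d^{±1}] satisfy the Hecke quadratic relation (H_i − q^{−1})(H_i + q) = 0 for each 1 ≤ i ≤ d−1. -/

import Mathlib

open LaurentPolynomial

noncomputable section

/-- The ground ring `k = ℤ[q,q⁻¹]`. -/
abbrev LP : Type := LaurentPolynomial ℤ

/-- The ring `k[X_1^{±1}, …, X_d^{±1}]` of Laurent polynomials in `d` variables over
`k = ℤ[q,q⁻¹]`, realized as the monoid algebra of `ℤ^d`. -/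
abbrev MvLaurent (d : ℕ) : Type := AddMonoidAlgebra LP (Fin d → ℤ)

/-- The variable `X_i`. -/
def Xvar {d : ℕ} (i : Fin d) : MvLaurent d :=
  AddMonoidAlgebra.single (Pi.single i (1 : ℤ)) (1 : LP)

/-- The additive automorphism of exponents induced by a permutation of the variables. -/
def permAddEquiv {d : ℕ} (π : Equiv.Perm (Fin d)) : (Fin d → ℤ) ≃+ (Fin d → ℤ) where
  toFun f := f ∘ π
  invFun f := f ∘ π.symm
  left_inv f := by funext x; simp
  right_inv f := by funext x; simp
  map_add' f g := rfl

/-- The algebra automorphism of `k[X_1^{±1},…,X_d^{±1}]` permuting the variables by `π`. -/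
def permAut {d : ℕ} (π : Equiv.Perm (Fin d)) : MvLaurent d ≃ₐ[LP] MvLaurent d :=
  AddMonoidAlgebra.domCongr LP LP (permAddEquiv π)

/-- The scalar `q^n` in `MvLaurent d`. -/
def qq {d : ℕ} (n : ℤ) : MvLaurent d := algebraMap LP (MvLaurent d) (T n)

/-- `H` is the Demazure–Lusztig operator for the pair of variables `(a, b)` (typically
`(i, i+1)`), i.e. it satisfies the defining equation
`(X_a − X_b)·(H f) = q⁻¹·(X_a − X_b)·f + (q·X_b − q⁻¹·X_a)·(f − f^{s})`,
which uniquely characterizes `H f = q⁻¹·f + (q·X_b − q⁻¹·X_a)·(f − f^s)/(X_a − X_b)`. -/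
def IsDL {d : ℕ} (a b : Fin d) (H : MvLaurent d → MvLaurent d) : Prop :=
  ∀ f : MvLaurent d,
    (Xvar a - Xvar b) * H f
      = qq (-1) * ((Xvar a - Xvar b) * f)
        + (qq 1 * Xvar b - qq (-1) * Xvar a) * (f - permAut (Equiv.swap a b) f)

end


section Aux

lemma permAddEquiv_single {d : ℕ} (π : Equiv.Perm (Fin d)) (j : Fin d) :
    permAddEquiv π (Pi.single j (1 : ℤ)) = Pi.single (π.symm j) 1 := by
  have h0 : permAddEquiv π (Pi.single j (1 : ℤ)) = Pi.single j (1 : ℤ) ∘ π := rfl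
  funext x
  rw [h0, Function.comp_apply, Pi.single_apply, Pi.single_apply]
  simp only [Equiv.apply_eq_iff_eq_symm_apply]

lemma permAut_Xvar {d : ℕ} (π : Equiv.Perm (Fin d)) (j : Fin d) :
    permAut π (Xvar j) = Xvar (π.symm j) := by
  simp [permAut, Xvar, AddMonoidAlgebra.domCongr_single, permAddEquiv_single]

lemma permAut_swap_swap {d : ℕ} (a b : Fin d) (x : MvLaurent d) :
    permAut (Equiv.swap a b) (permAut (Equiv.swap a b) x) = x := by
  have h0 : (permAddEquiv (d := d) (Equiv.swap a b)).symm
      = permAddEquiv ((Equiv.swap a b).symm) := AddEquiv.ext fun f => rfl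
  have h : (permAut (Equiv.swap a b)).symm = permAut (Equiv.swap a b) := by
    rw [permAut, AddMonoidAlgebra.domCongr_symm, h0, Equiv.symm_swap]
  conv_lhs => rw [← h]
  exact (permAut (Equiv.swap a b)).symm_apply_apply x

lemma permAut_qq {d : ℕ} (π : Equiv.Perm (Fin d)) (n : ℤ) :
    permAut π (qq n) = (qq n : MvLaurent d) :=
  (permAut π).commutes (LaurentPolynomial.T n)

lemma Xvar_sub_ne_zero {d : ℕ} {a b : Fin d} (hab : a ≠ b) :
    Xvar a - Xvar b ≠ (0 : MvLaurent d) := by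
  rw [sub_ne_zero]
  intro h
  rw [Xvar, Xvar, AddMonoidAlgebra.single_inj] at h
  rcases h with ⟨h, -⟩ | ⟨h, -⟩
  · have := congrFun h a
    rw [Pi.single_eq_same, Pi.single_eq_of_ne hab] at this
    exact one_ne_zero this
  · exact one_ne_zero h

end Aux

/-- the Demazure–Lusztig operators
`H_i·f = q⁻¹·f + (q·X_{i+1} − q⁻¹·X_i)·(f − f^{s_i})/(X_i − X_{i+1})` on the Laurent
polynomial ring satisfy the Hecke quadratic relation `(H_i − q⁻¹)(H_i + q) = 0` as
operators, i.e. `(H_i − q⁻¹)((H_i + q) f) = 0` for every `f`. -/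
theorem dl_quadratic (d i : ℕ) (hi : i + 1 < d)
    (H : MvLaurent d → MvLaurent d)
    (hH : IsDL ⟨i, Nat.lt_of_succ_lt hi⟩ ⟨i + 1, hi⟩ H) (f : MvLaurent d) :
    H (H f + qq 1 * f) - qq (-1) * (H f + qq 1 * f) = 0 := by
  set a : Fin d := ⟨i, Nat.lt_of_succ_lt hi⟩ with ha
  set b : Fin d := ⟨i + 1, hi⟩ with hb
  have hab : a ≠ b := by
    simp only [ha, hb, ne_eq, Fin.mk.injEq]
    omega
  set σ := permAut (Equiv.swap a b) with hσ
  have hσa : σ (Xvar a) = Xvar b := by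
    rw [hσ, permAut_Xvar, Equiv.symm_swap, Equiv.swap_apply_left]
  have hσb : σ (Xvar b) = Xvar a := by
    rw [hσ, permAut_Xvar, Equiv.symm_swap, Equiv.swap_apply_right]
  have hσσ : ∀ x, σ (σ x) = x := permAut_swap_swap a b
  have hσq : ∀ n : ℤ, σ (qq n) = qq n := fun n => permAut_qq _ n
  have hs : Xvar a - Xvar b ≠ (0 : MvLaurent d) := Xvar_sub_ne_zero hab
  have h1 := hH f
  rw [← hσ] at h1
  have h2 := congrArg σ h1
  simp only [map_mul, map_sub, map_add, hσa, hσb, hσq, hσσ] at h2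
  have hkey : H f - σ (H f) = qq 1 * (σ f - f) := by
    apply mul_left_cancel₀ hs
    linear_combination h1 + h2
  have h4 : (H f + qq 1 * f) - σ (H f + qq 1 * f) = 0 := by
    rw [map_add, map_mul, hσq]
    linear_combination hkey
  have h3 := hH (H f + qq 1 * f)
  apply mul_left_cancel₀ hs
  rw [mul_zero]
  linear_combination h3 + (qq 1 * Xvar b - qq (-1) * Xvar a) * h4
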